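/- Let $(p_j)$ be positive, non-increasing, summable frequencies, $\Delta\nu(x) = \#\{j : x/2 < p_j \le x\}$, $V(t) = \sum_j (e^{-tp_j} - e^{-2tp_j})$, and set $\bar v = \limsup_{t\to\infty} V(t)$, $\bar w = \limsup_{x\downarrow 0}\Delta\nu(x)$. Then $\bar v < \infty$ iff $\bar w < \infty$, and in that case $(\sqrt5 - 2)\,\bar w \le \bar v \le \bar w$. -/

import Mathlib

open Real Set Filter MeasureTheory Topology
open scoped ENNReal goldenRatio

/-!
The summand `exp (-(t * p)) - exp (-(2 * t * p))` is the mass of `[p, 2 * p)` under the measure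
with density `t * exp (-(t * x))`, and `x ∈ [p j, 2 * p j)` exactly when `j` is counted by `Δν x`.
Hence `V t = ∫ Δν x * t * exp (-(t * x)) dx`: if `Δν ≤ W` on `(0, x₀]`, then
`V t ≤ W + #{j | x₀ / 2 < p j} * exp (-(t * x₀))`, which gives `vbar ≤ wbar`.
Conversely, at `t = 2 * log φ / x` every `j` counted by `Δν x` has `y = exp (-(t * p j))` in
`[φ⁻¹ ^ 2, φ⁻¹]`, where `y - y ^ 2 ≥ φ⁻¹ - φ⁻¹ ^ 2 = √5 - 2`; so `V t ≥ (√5 - 2) * Δν x`.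
-/

def dyadicBlock (p : ℕ → ℝ) (x : ℝ) : Set ℕ := {j | x / 2 < p j ∧ p j ≤ x}

noncomputable def occupancyKernel (u : ℝ) : ℝ := exp (-u) - exp (-(2 * u))

lemma exp_neg_two_mul (u : ℝ) : exp (-(2 * u)) = exp (-u) ^ 2 := by
  rw [← exp_nat_mul]; push_cast; ring_nf

lemma occupancyKernel_nonneg {u : ℝ} (hu : 0 ≤ u) : 0 ≤ occupancyKernel u :=
  sub_nonneg.2 (exp_le_exp.2 (by linarith))

lemma occupancyKernel_le (u : ℝ) : occupancyKernel u ≤ u := by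
  have := add_one_le_exp (-u)
  rw [occupancyKernel, exp_neg_two_mul]
  nlinarith [sq_nonneg (1 - exp (-u))]

lemma sqrt_five_sub_two_pos : 0 < √5 - 2 := by
  nlinarith [sq_sqrt (show (0 : ℝ) ≤ 5 by norm_num), sqrt_nonneg 5]

lemma sqrt_five_sub_two_le_sub_sq {y : ℝ} (h₁ : φ⁻¹ ^ 2 ≤ y) (h₂ : y ≤ φ⁻¹) :
    √5 - 2 ≤ y - y ^ 2 := by
  rw [inv_goldenRatio] at h₁ h₂
  have hψ : ψ = (1 - √5) / 2 := rfl
  have hψ2 := goldenConj_sq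
  nlinarith [mul_nonneg (sub_nonneg.2 h₁) (sub_nonneg.2 h₂)]

lemma sqrt_five_sub_two_le_occupancyKernel {u : ℝ} (h₁ : log φ < u) (h₂ : u ≤ 2 * log φ) :
    √5 - 2 ≤ occupancyKernel u := by
  have hinv : exp (-log φ) = φ⁻¹ := by rw [exp_neg, exp_log goldenRatio_pos]
  rw [occupancyKernel, exp_neg_two_mul]
  refine sqrt_five_sub_two_le_sub_sq ?_ (hinv ▸ exp_le_exp.2 (by linarith))
  rw [← hinv, ← exp_neg_two_mul]
  exact exp_le_exp.2 (by linarith)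

noncomputable def expStieltjes {t : ℝ} (ht : 0 ≤ t) : StieltjesFunction ℝ where
  toFun x := -exp (-(t * x))
  mono' _ _ h := neg_le_neg (exp_le_exp.2 (by nlinarith))
  right_continuous' _ := (by fun_prop : Continuous fun x => -exp (-(t * x))).continuousWithinAt

section
variable {t : ℝ}

lemma expStieltjes_apply (ht : 0 ≤ t) (x : ℝ) : expStieltjes ht x = -exp (-(t * x)) := rfl

lemma continuous_expStieltjes (ht : 0 ≤ t) : Continuous (expStieltjes ht) := by
  simp only [funext (expStieltjes_apply ht)]; fun_prop

lemma expStieltjes_measure_Ico (ht : 0 ≤ t) (a b : ℝ) :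
    (expStieltjes ht).measure (Ico a b) = ENNReal.ofReal (exp (-(t * a)) - exp (-(t * b))) := by
  have hleft (x : ℝ) : Function.leftLim (expStieltjes ht) x = expStieltjes ht x :=
    (continuous_expStieltjes ht).continuousWithinAt.leftLim_eq
  rw [StieltjesFunction.measure_Ico, hleft, hleft, expStieltjes_apply,
    expStieltjes_apply, neg_sub_neg]

lemma expStieltjes_measure_Ioi (ht : 0 < t) (a : ℝ) :
    (expStieltjes ht.le).measure (Ioi a) = ENNReal.ofReal (exp (-(t * a))) := by
  have hlim : Tendsto (expStieltjes ht.le) atTop (𝓝 0) := by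
    have : Tendsto (fun x => -(t * x)) atTop atBot :=
      tendsto_neg_atTop_atBot.comp (tendsto_id.const_mul_atTop ht)
    simpa [funext (expStieltjes_apply ht.le), Function.comp_def] using
      (tendsto_exp_atBot.comp this).neg
  rw [(expStieltjes ht.le).measure_Ioi hlim, expStieltjes_apply, zero_sub, neg_neg]

end

section
variable {p : ℕ → ℝ} {t : ℝ}

lemma finite_setOf_lt_of_tendsto_zero (hp : Tendsto p atTop (𝓝 0)) {c : ℝ} (hc : 0 < c) :
    {j | c < p j}.Finite := by
  have := hp.eventually_lt_const hc
  rw [← Nat.cofinite_eq_atTop, eventually_cofinite] at this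
  exact this.subset fun j hj => not_lt.2 hj.le

lemma dyadicBlock_eq_empty {x : ℝ} (hx : x ≤ 0) : dyadicBlock p x = ∅ :=
  eq_empty_of_forall_notMem fun _ hj => by linarith [hj.1, hj.2]

lemma dyadicBlock_subset {x₀ x : ℝ} (hx : x₀ ≤ x) : dyadicBlock p x ⊆ {j | x₀ / 2 < p j} :=
  fun j hj => show x₀ / 2 < p j by linarith [hj.1]

lemma dyadicBlock_finite (hp : Tendsto p atTop (𝓝 0)) (x : ℝ) : (dyadicBlock p x).Finite := by
  rcases le_or_gt x 0 with hx | hx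
  · simp [dyadicBlock_eq_empty hx]
  · exact (finite_setOf_lt_of_tendsto_zero hp (half_pos hx)).subset (dyadicBlock_subset le_rfl)

lemma mem_dyadicBlock_iff_mem_Ico {j : ℕ} {x : ℝ} :
    j ∈ dyadicBlock p x ↔ x ∈ Ico (p j) (2 * p j) := by
  simp only [dyadicBlock, mem_ofPred_eq, mem_Ico]
  constructor <;> rintro ⟨h₁, h₂⟩ <;> constructor <;> linarith

lemma tsum_indicator_Ico_eq_encard (x : ℝ) :
    ∑' j, (Ico (p j) (2 * p j)).indicator (1 : ℝ → ℝ≥0∞) x = (dyadicBlock p x).encard := by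
  rw [← ENNReal.tsum_set_one, tsum_subtype (dyadicBlock p x) fun _ => (1 : ℝ≥0∞)]
  congr 1 with j
  by_cases h : x ∈ Ico (p j) (2 * p j)
  · simp [h, mem_dyadicBlock_iff_mem_Ico.2 h]
  · simp [h, mt mem_dyadicBlock_iff_mem_Ico.1 h]


lemma summable_occupancyKernel (hpos : ∀ j, 0 < p j) (hsum : Summable p) (ht : 0 < t) :
    Summable fun j => occupancyKernel (t * p j) :=
  .of_nonneg_of_le (fun j => occupancyKernel_nonneg (mul_pos ht (hpos j)).le)
    (fun _ => occupancyKernel_le _) (hsum.mul_left t)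

lemma ofReal_tsum_occupancyKernel_eq_lintegral (hpos : ∀ j, 0 < p j) (hsum : Summable p)
    (ht : 0 < t) :
    ENNReal.ofReal (∑' j, occupancyKernel (t * p j)) =
      ∫⁻ x, (dyadicBlock p x).encard ∂(expStieltjes ht.le).measure := by
  simp_rw [← tsum_indicator_Ico_eq_encard]
  rw [ENNReal.ofReal_tsum_of_nonneg (fun j => occupancyKernel_nonneg (mul_pos ht (hpos j)).le)
      (summable_occupancyKernel hpos hsum ht),
    lintegral_tsum fun j => (measurable_one.indicator measurableSet_Ico).aemeasurable]
  congr 1 with _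
  rw [lintegral_indicator_one measurableSet_Ico, expStieltjes_measure_Ico, occupancyKernel]
  ring_nf

lemma encard_dyadicBlock_le_indicator (hp : Tendsto p atTop (𝓝 0)) {x₀ W : ℝ}
    (hW : ∀ x ∈ Ioc 0 x₀, ((dyadicBlock p x).ncard : ℝ) ≤ W) (x : ℝ) :
    ((dyadicBlock p x).encard : ℝ≥0∞) ≤ (Ioi 0).indicator (fun _ => ENNReal.ofReal W) x +
      (Ioi x₀).indicator (fun _ => ({j | x₀ / 2 < p j}.encard : ℝ≥0∞)) x := by
  rcases le_or_gt x 0 with hx | hx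
  · simp [dyadicBlock_eq_empty hx]
  rcases le_or_gt x x₀ with hxx | hxx
  · rw [indicator_of_mem (mem_Ioi.2 hx), indicator_of_notMem (notMem_Ioi.2 hxx), add_zero,
      ← (dyadicBlock_finite hp x).cast_ncard_eq, ENat.toENNReal_coe, ← ENNReal.ofReal_natCast]
    exact ENNReal.ofReal_le_ofReal (hW x ⟨hx, hxx⟩)
  · rw [indicator_of_mem (mem_Ioi.2 hxx)]
    exact le_add_left (by gcongr; exact dyadicBlock_subset hxx.le)

lemma tsum_occupancyKernel_le (hpos : ∀ j, 0 < p j) (hsum : Summable p) (ht : 0 < t)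
    {x₀ W : ℝ} (hx₀ : 0 < x₀) (hW : ∀ x ∈ Ioc 0 x₀, ((dyadicBlock p x).ncard : ℝ) ≤ W) :
    ∑' j, occupancyKernel (t * p j) ≤ W + {j | x₀ / 2 < p j}.ncard * exp (-(t * x₀)) := by
  have hW₀ : 0 ≤ W := (Nat.cast_nonneg _).trans (hW x₀ ⟨hx₀, le_rfl⟩)
  have hfin := finite_setOf_lt_of_tendsto_zero hsum.tendsto_atTop_zero (half_pos hx₀)
  rw [← ENNReal.ofReal_le_ofReal_iff (by positivity),
    ofReal_tsum_occupancyKernel_eq_lintegral hpos hsum ht]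
  calc ∫⁻ x, (dyadicBlock p x).encard ∂(expStieltjes ht.le).measure
      ≤ ∫⁻ x, (Ioi 0).indicator (fun _ => ENNReal.ofReal W) x +
          (Ioi x₀).indicator (fun _ => ({j | x₀ / 2 < p j}.encard : ℝ≥0∞)) x
            ∂(expStieltjes ht.le).measure :=
        lintegral_mono (encard_dyadicBlock_le_indicator hsum.tendsto_atTop_zero hW)
    _ = ENNReal.ofReal (W + {j | x₀ / 2 < p j}.ncard * exp (-(t * x₀))) := by
        rw [lintegral_add_left (measurable_const.indicator measurableSet_Ioi),
          lintegral_indicator_const measurableSet_Ioi, lintegral_indicator_const measurableSet_Ioi,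
          expStieltjes_measure_Ioi ht, expStieltjes_measure_Ioi ht, mul_zero, neg_zero, exp_zero,
          ENNReal.ofReal_one, mul_one, ← hfin.cast_ncard_eq, ENat.toENNReal_coe,
          ENNReal.ofReal_add hW₀ (by positivity), ENNReal.ofReal_mul (by positivity),
          ENNReal.ofReal_natCast]

lemma sqrt_five_sub_two_mul_ncard_le (hpos : ∀ j, 0 < p j) (hsum : Summable p) {x : ℝ}
    (hx : 0 < x) :
    (√5 - 2) * (dyadicBlock p x).ncard ≤ ∑' j, occupancyKernel (2 * log φ / x * p j) := by
  have hlog : 0 < log φ := log_pos one_lt_goldenRatio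
  have ht : 0 < 2 * log φ / x := by positivity
  have hfin := dyadicBlock_finite hsum.tendsto_atTop_zero x
  have hblock (j : ℕ) (hj : j ∈ hfin.toFinset) :
      √5 - 2 ≤ occupancyKernel (2 * log φ / x * p j) := by
    obtain ⟨hj₁, hj₂⟩ := hfin.mem_toFinset.1 hj
    apply sqrt_five_sub_two_le_occupancyKernel
    · rw [div_mul_eq_mul_div, lt_div_iff₀ hx]; nlinarith
    · rw [div_mul_eq_mul_div, div_le_iff₀ hx]; nlinarith
  calc (√5 - 2) * (dyadicBlock p x).ncard = ∑ _j ∈ hfin.toFinset, (√5 - 2) := by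
        rw [Finset.sum_const, nsmul_eq_mul, mul_comm, ncard_eq_toFinset_card _ hfin]
    _ ≤ ∑ j ∈ hfin.toFinset, occupancyKernel (2 * log φ / x * p j) := Finset.sum_le_sum hblock
    _ ≤ _ := (summable_occupancyKernel hpos hsum ht).sum_le_tsum _
        fun j _ => occupancyKernel_nonneg (mul_pos ht (hpos j)).le

theorem limsup_tsum_occupancyKernel_le (hpos : ∀ j, 0 < p j) (hsum : Summable p) :
    limsup (fun t => ((∑' j, occupancyKernel (t * p j) : ℝ) : EReal)) atTop ≤
      limsup (fun x => (((dyadicBlock p x).ncard : ℝ) : EReal)) (𝓝[>] 0) := by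
  refine le_of_forall_gt_imp_ge_of_dense fun a ha => ?_
  obtain ⟨r, hr, hra⟩ := EReal.lt_iff_exists_real_btwn.1 ha
  obtain ⟨x₀, hx₀, hsub⟩ := mem_nhdsGT_iff_exists_Ioc_subset.1 (eventually_lt_of_limsup_lt hr)
  have hW (x : ℝ) (hx : x ∈ Ioc 0 x₀) : ((dyadicBlock p x).ncard : ℝ) ≤ r :=
    (EReal.coe_lt_coe_iff.1 (hsub hx)).le
  have hlim : Tendsto (fun t => r + {j | x₀ / 2 < p j}.ncard * exp (-(t * x₀))) atTop (𝓝 r) := by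
    have : Tendsto (fun t => -(t * x₀)) atTop atBot :=
      tendsto_neg_atTop_atBot.comp (tendsto_id.atTop_mul_const hx₀)
    simpa using ((tendsto_exp_atBot.comp this).const_mul _).const_add r
  calc limsup (fun t => ((∑' j, occupancyKernel (t * p j) : ℝ) : EReal)) atTop
      ≤ limsup (fun t => ((r + {j | x₀ / 2 < p j}.ncard * exp (-(t * x₀)) : ℝ) : EReal)) atTop :=
        limsup_le_limsup (eventually_gt_atTop 0 |>.mono fun t ht =>
          EReal.coe_le_coe_iff.2 (tsum_occupancyKernel_le hpos hsum ht hx₀ hW))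
    _ = r := (EReal.tendsto_coe.2 hlim).limsup_eq
    _ ≤ a := hra.le

theorem sqrt_five_sub_two_mul_limsup_le (hpos : ∀ j, 0 < p j) (hsum : Summable p) :
    ((√5 - 2 : ℝ) : EReal) * limsup (fun x => (((dyadicBlock p x).ncard : ℝ) : EReal)) (𝓝[>] 0) ≤
      limsup (fun t => ((∑' j, occupancyKernel (t * p j) : ℝ) : EReal)) atTop := by
  have hlog : 0 < log φ := log_pos one_lt_goldenRatio
  have hm : Tendsto (fun x => 2 * log φ / x) (𝓝[>] 0) atTop := by
    simpa only [div_eq_mul_inv] using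
      tendsto_inv_nhdsGT_zero.const_mul_atTop (by positivity : 0 < 2 * log φ)
  rw [← EReal.limsup_const_mul_of_nonneg_of_ne_top (EReal.coe_nonneg.2 sqrt_five_sub_two_pos.le)
    (EReal.coe_ne_top _)]
  calc limsup (fun x => ((√5 - 2 : ℝ) : EReal) * (((dyadicBlock p x).ncard : ℝ) : EReal)) (𝓝[>] 0)
      ≤ limsup (fun x => ((∑' j, occupancyKernel (2 * log φ / x * p j) : ℝ) : EReal)) (𝓝[>] 0) :=
        limsup_le_limsup (eventually_mem_nhdsWithin.mono fun x hx => by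
          dsimp only; exact_mod_cast sqrt_five_sub_two_mul_ncard_le hpos hsum hx)
    _ ≤ _ :=
        hm.limsup_comp_le_limsup (u := fun t => ((∑' j, occupancyKernel (t * p j) : ℝ) : EReal))

end

theorem stmt8 (p : ℕ → ℝ) (hpos : ∀ j, 0 < p j)
    (hsum : Summable p)
    (V : ℝ → ℝ)
    (hV : ∀ t : ℝ, V t = ∑' j : ℕ, (Real.exp (-(t * p j)) - Real.exp (-(2 * t * p j))))
    (Δν : ℝ → ℝ) (hΔν : ∀ x : ℝ, Δν x = (({j : ℕ | x / 2 < p j ∧ p j ≤ x}).ncard : ℝ))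
    (vbar wbar : EReal)
    (hvbar : vbar = Filter.limsup (fun t : ℝ => ((V t : ℝ) : EReal)) atTop)
    (hwbar : wbar = Filter.limsup (fun x : ℝ => ((Δν x : ℝ) : EReal))
      (nhdsWithin (0 : ℝ) (Set.Ioi (0 : ℝ)))) :
    (vbar < ⊤ ↔ wbar < ⊤) ∧
    (wbar < ⊤ → ((Real.sqrt 5 - 2 : ℝ) : EReal) * wbar ≤ vbar ∧ vbar ≤ wbar) := by
  obtain rfl : V = fun t => ∑' j, occupancyKernel (t * p j) :=
    funext fun t => by simp only [hV, occupancyKernel, mul_assoc]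
  obtain rfl : Δν = fun x => ((dyadicBlock p x).ncard : ℝ) := funext hΔν
  subst hvbar hwbar
  have hup := limsup_tsum_occupancyKernel_le hpos hsum
  have hlow := sqrt_five_sub_two_mul_limsup_le hpos hsum
  refine ⟨⟨fun hv => ?_, hup.trans_lt⟩, fun _ => ⟨hlow, hup⟩⟩
  by_contra! hw
  rw [top_le_iff.1 hw, EReal.coe_mul_top_of_pos sqrt_five_sub_two_pos] at hlow
  exact hv.ne (top_le_iff.1 hlow)
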